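/- arXiv:2605.20808 — 2 statements merged into one kernel-verified Lean document; each statement's English description precedes it below -/
import Mathlib

section
/- If H_g, H_f ∈ ℝ^{N×C} both have all rows of unit Euclidean norm, then (1/N²)·‖H_gH_gᵀ − H_fH_fᵀ‖_F² ≤ (4/N)·‖H_g − H_f‖_F². That is, the per-sample spatial Gram alignment loss is at most 4 times the patch-wise squared-distance REPA loss. -/
open Matrix

noncomputable def frobNorm {m n : Type*} [Fintype m] [Fintype n]
    (A : Matrix m n ℝ) : ℝ :=
  Real.sqrt (∑ i, ∑ j, (A i j) ^ 2)

theorem sga_le_four_repa (N C : ℕ)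
    (Hg Hf : Matrix (Fin N) (Fin C) ℝ)
    (hg : ∀ i : Fin N, ∑ j : Fin C, (Hg i j) ^ 2 = 1)
    (hf : ∀ i : Fin N, ∑ j : Fin C, (Hf i j) ^ 2 = 1) :
    (1 / (N : ℝ) ^ 2) * frobNorm (Hg * Hgᵀ - Hf * Hfᵀ) ^ 2
      ≤ (4 / (N : ℝ)) * frobNorm (Hg - Hf) ^ 2 := by
  rcases Nat.eq_zero_or_pos N with h0 | hN
  · subst h0
    simp [frobNorm]
  have hNR : (0 : ℝ) < N := by exact_mod_cast hN
  have hsq : ∀ {m n : ℕ} (A : Matrix (Fin m) (Fin n) ℝ),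
      frobNorm A ^ 2 = ∑ i, ∑ j, (A i j) ^ 2 := by
    intro m n A
    exact Real.sq_sqrt (Finset.sum_nonneg fun i _ =>
      Finset.sum_nonneg fun j _ => sq_nonneg _)
  rw [hsq (Hg * Hgᵀ - Hf * Hfᵀ), hsq (Hg - Hf)]
  set D : Matrix (Fin N) (Fin C) ℝ := Hg - Hf with hD
  set S : ℝ := ∑ i, ∑ j, (D i j) ^ 2 with hS
  have hDnn : ∀ k : Fin N, 0 ≤ ∑ j, (D k j) ^ 2 := fun k =>
    Finset.sum_nonneg fun j _ => sq_nonneg _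
  have key : ∀ i k : Fin N,
      ((Hg * Hgᵀ - Hf * Hfᵀ) i k) ^ 2
        ≤ 2 * (∑ j, (D k j) ^ 2) + 2 * (∑ j, (D i j) ^ 2) := by
    intro i k
    have hentry : (Hg * Hgᵀ - Hf * Hfᵀ) i k
        = (∑ j, Hg i j * D k j) + (∑ j, D i j * Hf k j) := by
      simp only [Matrix.sub_apply, Matrix.mul_apply, Matrix.transpose_apply, hD,
        ← Finset.sum_add_distrib, ← Finset.sum_sub_distrib]
      apply Finset.sum_congr rfl
      intro j _
      ring
    rw [hentry]
    have h1 : (∑ j, Hg i j * D k j) ^ 2 ≤ ∑ j, (D k j) ^ 2 := by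
      have := Finset.sum_mul_sq_le_sq_mul_sq Finset.univ (fun j => Hg i j) (fun j => D k j)
      rwa [hg i, one_mul] at this
    have h2 : (∑ j, D i j * Hf k j) ^ 2 ≤ ∑ j, (D i j) ^ 2 := by
      have := Finset.sum_mul_sq_le_sq_mul_sq Finset.univ (fun j => D i j) (fun j => Hf k j)
      rwa [hf k, mul_one] at this
    nlinarith [sq_nonneg ((∑ j, Hg i j * D k j) - (∑ j, D i j * Hf k j))]
  have hsum : (∑ i, ∑ k, ((Hg * Hgᵀ - Hf * Hfᵀ) i k) ^ 2) ≤ 4 * N * S := by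
    calc (∑ i, ∑ k, ((Hg * Hgᵀ - Hf * Hfᵀ) i k) ^ 2)
        ≤ ∑ i : Fin N, ∑ k : Fin N, (2 * (∑ j, (D k j) ^ 2) + 2 * (∑ j, (D i j) ^ 2)) :=
          Finset.sum_le_sum fun i _ => Finset.sum_le_sum fun k _ => key i k
      _ = 4 * N * S := by
          simp only [Finset.sum_add_distrib, ← Finset.mul_sum, Finset.sum_const,
            Finset.card_univ, Fintype.card_fin, nsmul_eq_mul, hS]
          ring
  have hSnn : 0 ≤ S := Finset.sum_nonneg fun i _ => hDnn i
  calc (1 / (N : ℝ) ^ 2) * (∑ i, ∑ k, ((Hg * Hgᵀ - Hf * Hfᵀ) i k) ^ 2)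
      ≤ (1 / (N : ℝ) ^ 2) * (4 * N * S) := by
        apply mul_le_mul_of_nonneg_left hsum
        positivity
    _ = (4 / (N : ℝ)) * S := by field_simp
end

section
/- (Hoffman–Wielandt for symmetric matrices) For real symmetric N×N matrices A and B with eigenvalues λ_1(A) ≥ … ≥ λ_N(A) and λ_1(B) ≥ … ≥ λ_N(B) sorted in non-increasing order, Σ_i (λ_i(A) − λ_i(B))² ≤ ‖A − B‖_F². -/
open Matrix

/-!
Write `A = U diag(λ) Uᵀ` and `B = V diag(κ) Vᵀ`. Then `‖A - B‖_F² = ∑ λᵢ² - 2 tr(AB) + ∑ κᵢ²`,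
and `tr(AB) = λ ⬝ S κ` where `S = W ⊙ W` is the entrywise square of the orthogonal matrix
`W = Uᵀ V`, hence doubly stochastic. By Birkhoff's theorem the linear function `S ↦ λ ⬝ S κ`
is maximised on the doubly stochastic matrices at a permutation matrix, and by the rearrangement
inequality the best permutation pairs the eigenvalues in the same order. This gives von Neumann's
trace inequality `tr(AB) ≤ ∑ λᵢ(A) λᵢ(B)` for sorted eigenvalues, and the theorem follows.
-/

namespace Matrix

variable {m n : Type*} [Fintype m] [Fintype n]

theorem sum_sub_sq_eq_dotProduct {R : Type*} [CommRing R] (x y : n → R) :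
    ∑ i, (x i - y i) ^ 2 = x ⬝ᵥ x - 2 * (x ⬝ᵥ y) + y ⬝ᵥ y := by
  simp only [dotProduct, sub_sq, Finset.sum_add_distrib, Finset.sum_sub_distrib, Finset.mul_sum]
  ring_nf

theorem frobNorm_sq_eq_trace_transpose_mul (M : Matrix m n ℝ) :
    frobNorm M ^ 2 = trace (Mᵀ * M) := by
  rw [frobNorm, Real.sq_sqrt (by positivity), Finset.sum_comm]
  simp [trace, mul_apply, sq]

section DoublyStochastic

variable [DecidableEq m] [DecidableEq n] {R : Type*} [Field R] [LinearOrder R]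
  [IsStrictOrderedRing R]

theorem submatrix_mem_doublyStochastic {M : Matrix n n R} (hM : M ∈ doublyStochastic R n)
    (e f : m ≃ n) : M.submatrix e f ∈ doublyStochastic R m := by
  rw [mem_doublyStochastic_iff_sum] at hM ⊢
  obtain ⟨hM_nonneg, hM_row, hM_col⟩ := hM
  exact ⟨fun i j => hM_nonneg _ _, fun i => (f.sum_comp (M (e i))).trans (hM_row _),
    fun j => (e.sum_comp (M · (f j))).trans (hM_col _)⟩

theorem _root_.Monovary.dotProduct_mulVec_le_of_mem_doublyStochastic {a b : n → R}
    (hab : Monovary a b) {S : Matrix n n R} (hS : S ∈ doublyStochastic R n) :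
    a ⬝ᵥ S *ᵥ b ≤ a ⬝ᵥ b := by
  rw [← SetLike.mem_coe, doublyStochastic_eq_convexHull_permMatrix] at hS
  have hlin : IsLinearMap R fun S : Matrix n n R => a ⬝ᵥ S *ᵥ b :=
    ⟨fun S T => by rw [add_mulVec, dotProduct_add],
      fun c S => by rw [smul_mulVec, dotProduct_smul]⟩
  refine convexHull_min ?_ (convex_halfSpace_le hlin _) hS
  rintro _ ⟨σ, rfl⟩
  simpa [permMatrix_mulVec, dotProduct] using hab.sum_mul_comp_perm_le_sum_mul (σ := σ)

end DoublyStochastic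

theorem hadamard_self_mem_doublyStochastic [DecidableEq n] {W : Matrix n n ℝ}
    (hW : W ∈ unitaryGroup n ℝ) : W ⊙ W ∈ doublyStochastic ℝ n := by
  rw [mem_doublyStochastic_iff_sum]
  refine ⟨fun i j => mul_self_nonneg _, fun i => ?_, fun j => ?_⟩
  · simpa [mul_apply] using congr_fun₂ (mem_unitaryGroup_iff.1 hW) i i
  · simpa [mul_apply] using congr_fun₂ (mem_unitaryGroup_iff'.1 hW) j j

theorem trace_diagonal_mul_mul_diagonal_mul_transpose [DecidableEq n] {R : Type*} [CommSemiring R]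
    (a b : n → R) (W : Matrix n n R) :
    trace (diagonal a * W * diagonal b * Wᵀ) = a ⬝ᵥ (W ⊙ W) *ᵥ b := by
  simp only [trace, diag, mul_apply, diagonal_apply, ite_mul, mul_ite, zero_mul, mul_zero,
    Finset.sum_ite_eq, Finset.sum_ite_eq', Finset.mem_univ, if_true]
  simp only [dotProduct, mulVec, hadamard_apply, transpose_apply, Finset.mul_sum]
  exact Finset.sum_congr rfl fun i _ => Finset.sum_congr rfl fun j _ => by ring

theorem trace_mul_mul_transpose_mul_mul_mul_transpose {R : Type*} [CommSemiring R]
    (U V X Y : Matrix n n R) :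
    trace (U * X * Uᵀ * (V * Y * Vᵀ)) = trace (X * (Uᵀ * V) * Y * (Uᵀ * V)ᵀ) := by
  rw [transpose_mul, transpose_transpose]
  simp only [Matrix.mul_assoc]
  rw [trace_mul_comm U]
  simp only [Matrix.mul_assoc]

namespace IsHermitian

variable [DecidableEq n] {A B : Matrix n n ℝ} (hA : A.IsHermitian) (hB : B.IsHermitian)

theorem eq_eigenvectorUnitary_mul_diagonal_mul_transpose :
    A = (hA.eigenvectorUnitary : Matrix n n ℝ) * diagonal hA.eigenvalues *
      (hA.eigenvectorUnitary : Matrix n n ℝ)ᵀ := by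
  conv_lhs => rw [hA.spectral_theorem]
  simp [star_eq_conjTranspose, conjTranspose_eq_transpose_of_trivial]

theorem transpose_eigenvectorUnitary_mul_self :
    (hA.eigenvectorUnitary : Matrix n n ℝ)ᵀ * hA.eigenvectorUnitary = 1 := by
  simpa [star_eq_conjTranspose, conjTranspose_eq_transpose_of_trivial] using
    mem_unitaryGroup_iff'.1 hA.eigenvectorUnitary.2

theorem trace_mul_self : trace (A * A) = hA.eigenvalues ⬝ᵥ hA.eigenvalues := by
  conv_lhs => rw [hA.eq_eigenvectorUnitary_mul_diagonal_mul_transpose]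
  rw [trace_mul_mul_transpose_mul_mul_mul_transpose, hA.transpose_eigenvectorUnitary_mul_self]
  simp [diagonal_mul_diagonal, dotProduct]

theorem exists_mem_doublyStochastic_trace_mul_eq :
    ∃ S ∈ doublyStochastic ℝ n, trace (A * B) = hA.eigenvalues ⬝ᵥ S *ᵥ hB.eigenvalues := by
  set W := (hA.eigenvectorUnitary : Matrix n n ℝ)ᵀ * hB.eigenvectorUnitary
  have hW : W ∈ unitaryGroup n ℝ :=
    mul_mem (transpose_mem_unitaryGroup_iff.2 hA.eigenvectorUnitary.2) hB.eigenvectorUnitary.2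
  refine ⟨W ⊙ W, hadamard_self_mem_doublyStochastic hW, ?_⟩
  conv_lhs => rw [hA.eq_eigenvectorUnitary_mul_diagonal_mul_transpose,
    hB.eq_eigenvectorUnitary_mul_diagonal_mul_transpose]
  rw [trace_mul_mul_transpose_mul_mul_mul_transpose,
    trace_diagonal_mul_mul_diagonal_mul_transpose]

theorem trace_mul_le_of_monovary (σ τ : Equiv.Perm n)
    (h : Monovary (hA.eigenvalues ∘ σ) (hB.eigenvalues ∘ τ)) :
    trace (A * B) ≤ (hA.eigenvalues ∘ σ) ⬝ᵥ (hB.eigenvalues ∘ τ) := by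
  obtain ⟨S, hS, hAB⟩ := hA.exists_mem_doublyStochastic_trace_mul_eq hB
  calc trace (A * B) = (hA.eigenvalues ∘ σ) ⬝ᵥ S.submatrix σ τ *ᵥ (hB.eigenvalues ∘ τ) := by
        rw [hAB, submatrix_mulVec_equiv, comp_equiv_dotProduct_comp_equiv]
        simp [Function.comp_assoc]
    _ ≤ _ := h.dotProduct_mulVec_le_of_mem_doublyStochastic (submatrix_mem_doublyStochastic hS σ τ)

end IsHermitian

end Matrix

/-- Hoffman–Wielandt inequality for real symmetric matrices: if `μ` and `ν` enumerate
the eigenvalues (with multiplicity) of `A` and `B` in non-increasing order, then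
`∑ i (μ i - ν i)² ≤ ‖A - B‖_F²`. -/
theorem hoffman_wielandt_symmetric (N : ℕ)
    (A B : Matrix (Fin N) (Fin N) ℝ)
    (hA : A.IsHermitian) (hB : B.IsHermitian)
    (μ ν : Fin N → ℝ) (σ τ : Equiv.Perm (Fin N))
    (hμ : μ = hA.eigenvalues ∘ σ) (hν : ν = hB.eigenvalues ∘ τ)
    (hμ_sorted : Antitone μ) (hν_sorted : Antitone ν) :
    ∑ i : Fin N, (μ i - ν i) ^ 2 ≤ frobNorm (A - B) ^ 2 := by
  subst hμ hν
  have h_frob : frobNorm (A - B) ^ 2 = trace (A * A) - 2 * trace (A * B) + trace (B * B) := by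
    rw [frobNorm_sq_eq_trace_transpose_mul, (isHermitian_iff_isSymm.1 (hA.sub hB)).eq, sub_mul,
      mul_sub, mul_sub, trace_sub, trace_sub, trace_sub, trace_mul_comm B A]
    ring
  have h_trace := hA.trace_mul_le_of_monovary hB σ τ (hμ_sorted.monovary hν_sorted)
  rw [sum_sub_sq_eq_dotProduct, comp_equiv_dotProduct_comp_equiv, comp_equiv_dotProduct_comp_equiv,
    h_frob, hA.trace_mul_self, hB.trace_mul_self]
  linarith
end
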